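/- arXiv:1903.10001 — 3 statements merged into one kernel-verified Lean document; each statement's English description precedes it below -/
import Mathlib

section
/- Let (X, D) be an F-metric space with associated pair (f, α), and let d be the associated metric on X. Then the F-metric topology τ_F on X coincides with the metric topology τ_d of d; that is, a subset U ⊆ X is F-open (for every x ∈ U there is ε > 0 with B_D(x,ε) ⊆ U) if and only if U is open with respect to the metric d. -/
open Filter Topology

universe u v

/-- `(X, D)` is an `F`-metric space with associated pair `(f, α)`:
`f` is non-decreasing on `(0, ∞)` (F1), `f(tₙ) → -∞` iff `tₙ → 0` for positive
sequences (F2), `α ≥ 0`, `D` is nonnegative and satisfies (D1), (D2), (D3). -/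
structure IsFMetric {X : Type v} (D : X → X → ℝ) (f : ℝ → ℝ) (α : ℝ) : Prop where
  nonneg : ∀ x y : X, 0 ≤ D x y
  alpha_nonneg : 0 ≤ α
  f_mono : ∀ s t : ℝ, 0 < s → s < t → f s ≤ f t
  f_tendsto : ∀ t : ℕ → ℝ, (∀ n, 0 < t n) →
      (Tendsto t atTop (nhds 0) ↔ Tendsto (fun n => f (t n)) atTop atBot)
  eq_iff : ∀ x y : X, D x y = 0 ↔ x = y
  symm : ∀ x y : X, D x y = D y x
  ineq : ∀ x y : X, ∀ N : ℕ, 2 ≤ N → ∀ u : ℕ → X, u 0 = x → u (N - 1) = y →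
      0 < D x y →
      f (D x y) ≤ f (∑ i ∈ Finset.range (N - 1), D (u i) (u (i + 1))) + α

/-- The associated metric `d(x,y) = inf { Σ_{i<N-1} D(uᵢ, uᵢ₊₁) : N ≥ 2, u₀ = x, u_{N-1} = y }`. -/
noncomputable def assocDist {X : Type v} (D : X → X → ℝ) (x y : X) : ℝ :=
  sInf { s : ℝ | ∃ N : ℕ, 2 ≤ N ∧ ∃ u : ℕ → X, u 0 = x ∧ u (N - 1) = y ∧
    s = ∑ i ∈ Finset.range (N - 1), D (u i) (u (i + 1)) }

/-- The ball `B_ρ(x, ε) = { y : ρ(x,y) < ε }` for a distance-like function `ρ`. -/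
def ballWrt {X : Type v} (ρ : X → X → ℝ) (x : X) (ε : ℝ) : Set X := { y | ρ x y < ε }

/-- `U` is open w.r.t. `ρ`: every point of `U` has a `ρ`-ball around it inside `U`. -/
def IsOpenWrt {X : Type v} (ρ : X → X → ℝ) (U : Set X) : Prop :=
  ∀ x ∈ U, ∃ ε > 0, ballWrt ρ x ε ⊆ U

/-- `C` is closed w.r.t. `ρ`: its complement is open w.r.t. `ρ`. -/
def IsClosedWrt {X : Type v} (ρ : X → X → ℝ) (C : Set X) : Prop := IsOpenWrt ρ Cᶜ

/-- A sequence is Cauchy w.r.t. `ρ`: `ρ(xₙ, xₘ) → 0` as `n, m → ∞`. -/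
def IsCauchyWrt {X : Type v} (ρ : X → X → ℝ) (x : ℕ → X) : Prop :=
  ∀ ε > 0, ∃ N : ℕ, ∀ m, N ≤ m → ∀ n, N ≤ n → ρ (x m) (x n) < ε

/-- A sequence converges to `l` w.r.t. `ρ`: `ρ(xₙ, l) → 0` as `n → ∞`. -/
def ConvergesWrt {X : Type v} (ρ : X → X → ℝ) (x : ℕ → X) (l : X) : Prop :=
  Tendsto (fun n => ρ (x n) l) atTop (nhds 0)

/-- `X` is complete w.r.t. `ρ`: every Cauchy sequence converges. -/
def IsCompleteWrt {X : Type v} (ρ : X → X → ℝ) : Prop :=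
  ∀ x : ℕ → X, IsCauchyWrt ρ x → ∃ l : X, ConvergesWrt ρ x l

/-- The diameter of `A` w.r.t. `ρ`: `sup { ρ(x,y) : x, y ∈ A }`. -/
noncomputable def diamWrt {X : Type v} (ρ : X → X → ℝ) (A : Set X) : ℝ :=
  sSup { r : ℝ | ∃ x ∈ A, ∃ y ∈ A, r = ρ x y }

/-- `A` is bounded w.r.t. `ρ`: there is `M > 0` with `ρ(x,y) ≤ M` for all `x, y ∈ A`. -/
def IsBoundedWrt {X : Type v} (ρ : X → X → ℝ) (A : Set X) : Prop :=
  ∃ M > 0, ∀ x ∈ A, ∀ y ∈ A, ρ x y ≤ M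

/-- `A` is totally bounded w.r.t. `ρ`: for every `ε > 0` finitely many `ρ`-balls of
radius `ε` centered at points of `A` cover `A`. -/
def IsTotallyBoundedWrt {X : Type v} (ρ : X → X → ℝ) (A : Set X) : Prop :=
  ∀ ε > 0, ∃ t : Finset X, ↑t ⊆ A ∧ A ⊆ ⋃ a ∈ t, ballWrt ρ a ε

/-- `A` is compact w.r.t. `ρ`: every cover of `A` by `ρ`-open sets admits a finite subcover. -/
def IsCompactWrt {X : Type v} (ρ : X → X → ℝ) (A : Set X) : Prop :=
  ∀ 𝒰 : Set (Set X), (∀ U ∈ 𝒰, IsOpenWrt ρ U) → A ⊆ ⋃₀ 𝒰 →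
    ∃ 𝒱 ⊆ 𝒰, 𝒱.Finite ∧ A ⊆ ⋃₀ 𝒱

/-! The associated distance is at most `D`, since `x, y` is itself a chain, so `D`-open sets are
`d`-open. Conversely, (F2) gives `δ > 0` with `f t + α < f ε` for `0 < t < δ`; if `d(x, y) < δ`
there is a chain from `x` to `y` of total length `s < δ`, and (D3) gives
`f (D x y) ≤ f s + α < f ε`, hence `D x y < ε` by (F1). So every `D`-ball contains a `d`-ball. -/

theorem IsOpenWrt.of_ball_subset {X : Type v} {ρ σ : X → X → ℝ} {U : Set X}
    (h : ∀ x, ∀ ε > 0, ∃ δ > 0, ballWrt ρ x δ ⊆ ballWrt σ x ε) (hU : IsOpenWrt σ U) :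
    IsOpenWrt ρ U := by
  intro x hx
  obtain ⟨ε, hε, hεU⟩ := hU x hx
  obtain ⟨δ, hδ, hδε⟩ := h x ε hε
  exact ⟨δ, hδ, hδε.trans hεU⟩

theorem eq_of_forall_lt_eq_succ {X : Type v} {u : ℕ → X} :
    ∀ {n : ℕ}, (∀ i < n, u i = u (i + 1)) → u 0 = u n
  | 0, _ => rfl
  | n + 1, h => (eq_of_forall_lt_eq_succ fun i hi => h i (by omega)).trans (h n n.lt_succ_self)

theorem exists_pos_forall_lt_of_tendsto_atBot {f : ℝ → ℝ}
    (hf : ∀ t : ℕ → ℝ, (∀ n, 0 < t n) → Tendsto t atTop (𝓝 0) →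
      Tendsto (fun n => f (t n)) atTop atBot) (c : ℝ) :
    ∃ δ > 0, ∀ t, 0 < t → t < δ → f t < c := by
  by_contra! h
  choose t ht_pos ht_lt ht_ge using fun n : ℕ => h (1 / (n + 1)) (by positivity)
  have ht : Tendsto t atTop (𝓝 0) :=
    squeeze_zero (fun n => (ht_pos n).le) (fun n => (ht_lt n).le)
      tendsto_one_div_add_atTop_nhds_zero_nat
  obtain ⟨n, hn⟩ := ((hf t ht_pos ht).eventually (eventually_lt_atBot c)).exists
  exact (ht_ge n).not_gt hn

section assocDist

variable {X : Type v} {D : X → X → ℝ}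

def chainLengths (D : X → X → ℝ) (x y : X) : Set ℝ :=
  { s : ℝ | ∃ N : ℕ, 2 ≤ N ∧ ∃ u : ℕ → X, u 0 = x ∧ u (N - 1) = y ∧
    s = ∑ i ∈ Finset.range (N - 1), D (u i) (u (i + 1)) }

theorem assocDist_eq_sInf_chainLengths (x y : X) :
    assocDist D x y = sInf (chainLengths D x y) := rfl

theorem self_mem_chainLengths (x y : X) : D x y ∈ chainLengths D x y :=
  ⟨2, le_rfl, fun i => if i = 0 then x else y, by simp, by simp, by simp⟩

theorem bddBelow_chainLengths (hD : ∀ x y, 0 ≤ D x y) (x y : X) :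
    BddBelow (chainLengths D x y) := by
  refine ⟨0, ?_⟩
  rintro s ⟨N, -, u, -, -, rfl⟩
  exact Finset.sum_nonneg fun i _ => hD _ _

theorem assocDist_le (hD : ∀ x y, 0 ≤ D x y) (x y : X) : assocDist D x y ≤ D x y :=
  csInf_le (bddBelow_chainLengths hD x y) (self_mem_chainLengths x y)

theorem ballWrt_subset_ballWrt_assocDist (hD : ∀ x y, 0 ≤ D x y) (x : X) (ε : ℝ) :
    ballWrt D x ε ⊆ ballWrt (assocDist D) x ε :=
  fun y hy => (assocDist_le hD x y).trans_lt hy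

end assocDist

namespace IsFMetric

variable {X : Type v} {D : X → X → ℝ} {f : ℝ → ℝ} {α : ℝ}

theorem f_le_of_le (hD : IsFMetric D f α) {s t : ℝ} (hs : 0 < s) (hst : s ≤ t) : f s ≤ f t :=
  hst.eq_or_lt.elim (fun h => h ▸ le_rfl) (hD.f_mono s t hs)

theorem pos_of_mem_chainLengths (hD : IsFMetric D f α) {x y : X} (hxy : 0 < D x y) {s : ℝ}
    (hs : s ∈ chainLengths D x y) : 0 < s := by
  obtain ⟨N, -, u, rfl, rfl, rfl⟩ := hs
  refine (Finset.sum_nonneg fun i _ => hD.nonneg _ _).lt_of_ne fun hzero => hxy.ne' ?_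
  have hlinks := (Finset.sum_eq_zero_iff_of_nonneg fun i _ => hD.nonneg _ _).1 hzero.symm
  rw [(hD.eq_iff _ _).2 (eq_of_forall_lt_eq_succ fun i hi =>
    (hD.eq_iff _ _).1 (hlinks i (Finset.mem_range.2 hi)))]

theorem exists_ball_assocDist_subset_ball (hD : IsFMetric D f α) (x : X) {ε : ℝ} (hε : 0 < ε) :
    ∃ δ > 0, ballWrt (assocDist D) x δ ⊆ ballWrt D x ε := by
  obtain ⟨δ, hδ, hfδ⟩ := exists_pos_forall_lt_of_tendsto_atBot
    (fun t ht => (hD.f_tendsto t ht).1) (f ε - α)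
  refine ⟨δ, hδ, fun y hy => ?_⟩
  rcases (hD.nonneg x y).eq_or_lt with hzero | hxy
  · exact (show D x y < ε from hzero ▸ hε)
  change assocDist D x y < δ at hy
  rw [assocDist_eq_sInf_chainLengths] at hy
  obtain ⟨s, hs, hsδ⟩ := exists_lt_of_csInf_lt ⟨_, self_mem_chainLengths x y⟩ hy
  have hs_pos := hD.pos_of_mem_chainLengths hxy hs
  obtain ⟨N, hN, u, hu0, huN, rfl⟩ := hs
  have hf_lt : f (D x y) < f ε := by
    linarith [hD.ineq x y N hN u hu0 huN hxy, hfδ _ hs_pos hsδ]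
  exact lt_of_not_ge fun hεD => (hD.f_le_of_le hε hεD).not_gt hf_lt

end IsFMetric

theorem fOpen_iff_open_assocDist_general {X : Type v} (D : X → X → ℝ)
    (f : ℝ → ℝ) (α : ℝ) (hD : IsFMetric D f α) :
    ∀ U : Set X, IsOpenWrt D U ↔ IsOpenWrt (assocDist D) U := fun _ =>
  ⟨IsOpenWrt.of_ball_subset fun x _ hε => hD.exists_ball_assocDist_subset_ball x hε,
    IsOpenWrt.of_ball_subset fun x ε hε =>
      ⟨ε, hε, ballWrt_subset_ballWrt_assocDist hD.nonneg x ε⟩⟩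

/-- the `F`-metric topology coincides with the topology of the
associated metric: `U` is `F`-open iff `U` is `d`-open. -/
theorem fOpen_iff_open_assocDist {X : Type v} [Nonempty X] (D : X → X → ℝ)
    (f : ℝ → ℝ) (α : ℝ) (hD : IsFMetric D f α) :
    ∀ U : Set X, IsOpenWrt D U ↔ IsOpenWrt (assocDist D) U :=
  fOpen_iff_open_assocDist_general D f α hD
end

section
/- Let (X, D) be an F-metric space with associated pair (f, α), and let d be the associated metric on X. If A ⊆ X is totally bounded with respect to the metric d, then A is F-totally bounded (for every ε > 0 there exist finitely many points a_1, …, a_n ∈ A with A ⊆ ⋃_{i=1}^n B_D(a_i, ε)). -/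
open Filter Topology

universe u v

/-!
`d`-small forces `D`-small, uniformly: if `d(x,y) < δ` there is a chain from `x` to `y` of total
length `S < δ`, so (D3) gives `f(D(x,y)) ≤ f(S) + α`, and by (F2) `f(S) + α < f(ε)` once `δ` is
small; monotonicity of `f` then gives `D(x,y) < ε`. Hence a finite `δ`-net for `d` is an
`ε`-net for `D`.
-/

theorem IsTotallyBoundedWrt.of_uniform_control {X : Type v} {ρ σ : X → X → ℝ} {A : Set X}
    (hρσ : ∀ ε > 0, ∃ δ > 0, ∀ x y, ρ x y < δ → σ x y < ε)
    (hA : IsTotallyBoundedWrt ρ A) : IsTotallyBoundedWrt σ A := by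
  intro ε hε
  obtain ⟨δ, hδ, hδε⟩ := hρσ ε hε
  obtain ⟨t, htA, hcov⟩ := hA δ hδ
  refine ⟨t, htA, fun x hx => ?_⟩
  obtain ⟨a, ha, hxa⟩ := Set.mem_iUnion₂.mp (hcov hx)
  exact Set.mem_iUnion₂.mpr ⟨a, ha, hδε a x hxa⟩

theorem exists_chain_sum_lt_of_assocDist_lt {X : Type v} (D : X → X → ℝ) {x y : X} {δ : ℝ}
    (h : assocDist D x y < δ) :
    ∃ N, 2 ≤ N ∧ ∃ u : ℕ → X, u 0 = x ∧ u (N - 1) = y ∧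
      ∑ i ∈ Finset.range (N - 1), D (u i) (u (i + 1)) < δ := by
  have hne : { s : ℝ | ∃ N : ℕ, 2 ≤ N ∧ ∃ u : ℕ → X, u 0 = x ∧ u (N - 1) = y ∧
      s = ∑ i ∈ Finset.range (N - 1), D (u i) (u (i + 1)) }.Nonempty :=
    ⟨D x y, 2, le_rfl, fun i => if i = 0 then x else y, rfl, rfl, by simp⟩
  obtain ⟨_, ⟨N, hN, u, hu0, huN, rfl⟩, hlt⟩ := exists_lt_of_csInf_lt hne h
  exact ⟨N, hN, u, hu0, huN, hlt⟩

namespace IsFMetric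

variable {X : Type v} {D : X → X → ℝ} {f : ℝ → ℝ} {α : ℝ}

theorem monotoneOn (hD : IsFMetric D f α) : MonotoneOn f (Set.Ioi 0) := by
  intro s hs t _ hst
  rcases hst.eq_or_lt with rfl | hlt
  · exact le_rfl
  · exact hD.f_mono s t hs hlt

theorem exists_pos_forall_lt (hD : IsFMetric D f α) (c : ℝ) :
    ∃ δ > 0, ∀ t, 0 < t → t < δ → f t < c := by
  by_contra! h
  choose t ht_pos ht_lt ht_ge using fun n : ℕ => h (1 / (n + 1)) (by positivity)
  have ht : Tendsto t atTop (𝓝 0) :=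
    squeeze_zero (fun n => (ht_pos n).le) (fun n => (ht_lt n).le)
      tendsto_one_div_add_atTop_nhds_zero_nat
  obtain ⟨n, hn⟩ := (tendsto_atBot.mp ((hD.f_tendsto t ht_pos).mp ht) (c - 1)).exists
  linarith [ht_ge n]

theorem eq_of_chain_sum_eq_zero (hD : IsFMetric D f α) {N : ℕ} {u : ℕ → X}
    (hsum : ∑ i ∈ Finset.range N, D (u i) (u (i + 1)) = 0) : u 0 = u N := by
  have hzero := (Finset.sum_eq_zero_iff_of_nonneg fun i _ => hD.nonneg _ _).mp hsum
  induction N with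
  | zero => rfl
  | succ k ih =>
    rw [Finset.sum_range_succ] at hsum
    have hlast := hzero k (Finset.self_mem_range_succ k)
    rw [ih (by simpa [hlast] using hsum)
        fun i hi => hzero i (Finset.mem_range_succ_iff.mpr (Finset.mem_range.mp hi).le),
      (hD.eq_iff _ _).mp hlast]

theorem forall_exists_assocDist_lt_imp_lt (hD : IsFMetric D f α) :
    ∀ ε > 0, ∃ δ > 0, ∀ x y, assocDist D x y < δ → D x y < ε := by
  intro ε hε
  obtain ⟨δ, hδ, hfδ⟩ := hD.exists_pos_forall_lt (f ε - α)
  refine ⟨δ, hδ, fun x y hxy => ?_⟩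
  by_contra! hεD
  have hDpos : 0 < D x y := hε.trans_le hεD
  obtain ⟨N, hN, u, rfl, rfl, hlt⟩ := exists_chain_sum_lt_of_assocDist_lt D hxy
  have hpos : 0 < ∑ i ∈ Finset.range (N - 1), D (u i) (u (i + 1)) := by
    refine (Finset.sum_nonneg fun i _ => hD.nonneg _ _).lt_of_ne fun h0 => hDpos.ne' ?_
    exact (hD.eq_iff _ _).mpr (hD.eq_of_chain_sum_eq_zero h0.symm)
  have := hD.ineq _ _ N hN u rfl rfl hDpos
  linarith [hfδ _ hpos hlt, hD.monotoneOn hε hDpos hεD]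

end IsFMetric

theorem fTotallyBounded_of_totallyBounded_assocDist_general {X : Type v}
    (D : X → X → ℝ) (f : ℝ → ℝ) (α : ℝ) (hD : IsFMetric D f α) (A : Set X)
    (hA : IsTotallyBoundedWrt (assocDist D) A) :
    IsTotallyBoundedWrt D A :=
  hA.of_uniform_control hD.forall_exists_assocDist_lt_imp_lt

/-- if `A` is totally bounded w.r.t. the associated metric `d`, then
`A` is `F`-totally bounded. -/
theorem fTotallyBounded_of_totallyBounded_assocDist {X : Type v} [Nonempty X]
    (D : X → X → ℝ) (f : ℝ → ℝ) (α : ℝ) (hD : IsFMetric D f α) (A : Set X)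
    (hA : IsTotallyBoundedWrt (assocDist D) A) :
    IsTotallyBoundedWrt D A :=
  fTotallyBounded_of_totallyBounded_assocDist_general D f α hD A hA
end

section
/- Let (X, D) be an F-metric space with associated pair (f, α). If X is F-complete and F-totally bounded, then X is F-compact. -/
open Filter Topology

universe u v

open Set Uniformity

/-!
(D3) with three points, together with (F2), gives a relaxed triangle inequality: for every
`ε > 0` there is `δ > 0` such that `D x y < δ` and `D y z < δ` imply `D x z < ε`. Hence the sets
`{D < ε}` form a basis of a uniformity on `X` whose topology is `τ_F`. That basis is countable,
so `F`-completeness, a statement about sequences, makes the uniform space complete, and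
`F`-total boundedness makes it totally bounded; complete totally bounded spaces are compact.
-/

structure IsUniformDist {X : Type*} (ρ : X → X → ℝ) : Prop where
  refl : ∀ x, ρ x x = 0
  symm : ∀ x y, ρ x y = ρ y x
  relaxed_triangle : ∀ ε > 0, ∃ δ > 0, ∀ x y z, ρ x y < δ → ρ y z < δ → ρ x z < ε

namespace IsUniformDist

variable {X : Type*} {ρ : X → X → ℝ} (hρ : IsUniformDist ρ)
include hρ

@[reducible]
def uniformSpace : UniformSpace X :=
  .ofCore
    { uniformity := ⨅ r > 0, 𝓟 {p | ρ p.1 p.2 < r}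
      refl := le_iInf₂ fun r hr => principal_mono.2 <| by
        simp [Set.subset_def, SetRel.id, hρ.refl, hr]
      symm := tendsto_iInf_iInf fun r => tendsto_iInf_iInf fun _ =>
        tendsto_principal_principal.2 fun p hp => by simpa [hρ.symm] using hp
      comp := le_iInf₂ fun r hr =>
        let ⟨δ, hδ, hδr⟩ := hρ.relaxed_triangle r hr
        le_principal_iff.2 <| mem_of_superset
          (mem_lift' <| mem_iInf_of_mem δ <| mem_iInf_of_mem hδ <| mem_principal_self _)
          fun ⟨x, z⟩ ⟨y, hxy, hyz⟩ => hδr x y z hxy hyz }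

theorem hasBasis_uniformity :
    letI := hρ.uniformSpace
    (𝓤 X).HasBasis (0 < ·) fun ε => {p | ρ p.1 p.2 < ε} :=
  hasBasis_biInf_principal'
    (fun ε₁ h₁ ε₂ h₂ => ⟨min ε₁ ε₂, lt_min h₁ h₂,
      fun _ hp => by simp only [mem_ofPred_eq] at hp ⊢; exact hp.trans_le (min_le_left _ _),
      fun _ hp => by simp only [mem_ofPred_eq] at hp ⊢; exact hp.trans_le (min_le_right _ _)⟩)
    ⟨1, one_pos⟩

theorem hasBasis_nhds (x : X) :
    letI := hρ.uniformSpace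
    (𝓝 x).HasBasis (0 < ·) (ballWrt ρ x) :=
  letI := hρ.uniformSpace
  nhds_basis_uniformity' hρ.hasBasis_uniformity

theorem isOpen_of_isOpenWrt {U : Set X} (hU : IsOpenWrt ρ U) :
    letI := hρ.uniformSpace
    IsOpen U :=
  letI := hρ.uniformSpace
  isOpen_iff_mem_nhds.2 fun x hx => (hρ.hasBasis_nhds x).mem_iff.2 (hU x hx)

theorem isCountablyGenerated_uniformity :
    letI := hρ.uniformSpace
    (𝓤 X).IsCountablyGenerated :=
  letI := hρ.uniformSpace
  (hρ.hasBasis_uniformity.to_hasBasis (p' := fun _ : ℕ => True)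
    (s' := fun n => {p | ρ p.1 p.2 < 1 / (n + 1)})
    (fun _ hε => (exists_nat_one_div_lt hε).imp fun _ hn => ⟨trivial, fun _ hp => by
      simp only [mem_ofPred_eq] at hp ⊢; exact hp.trans hn⟩)
    fun n _ => ⟨_, Nat.one_div_pos_of_nat, subset_rfl⟩).isCountablyGenerated

theorem completeSpace (hc : IsCompleteWrt ρ) :
    letI := hρ.uniformSpace
    CompleteSpace X := by
  let := hρ.uniformSpace
  have := hρ.isCountablyGenerated_uniformity
  refine UniformSpace.complete_of_cauchySeq_tendsto fun u hu => ?_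
  obtain ⟨l, hl⟩ := hc u (hρ.hasBasis_uniformity.cauchySeq_iff.1 hu)
  refine ⟨l, (hρ.hasBasis_nhds l).tendsto_right_iff.2 fun ε hε => ?_⟩
  filter_upwards [hl.eventually (gt_mem_nhds hε)] with n hn
  rwa [ballWrt, mem_ofPred_eq, hρ.symm]

theorem totallyBounded_of_isTotallyBoundedWrt {A : Set X} (hA : IsTotallyBoundedWrt ρ A) :
    letI := hρ.uniformSpace
    TotallyBounded A := by
  let := hρ.uniformSpace
  refine hρ.hasBasis_uniformity.totallyBounded_iff.2 fun ε hε => ?_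
  obtain ⟨t, -, ht⟩ := hA ε hε
  refine ⟨t, t.finite_toSet, fun x hx => ?_⟩
  obtain ⟨a, ha, hxa⟩ := mem_iUnion₂.1 (ht hx)
  exact mem_iUnion₂.2 ⟨a, ha, show ρ x a < ε by rwa [hρ.symm]⟩

theorem isCompactWrt_of_isCompact {A : Set X}
    (hA : letI := hρ.uniformSpace; IsCompact A) : IsCompactWrt ρ A := by
  let := hρ.uniformSpace
  intro 𝒰 hopen hcover
  obtain ⟨𝒱, h𝒱𝒰, h𝒱, hcover'⟩ := hA.elim_finite_subcover_image (c := fun U => U)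
    (fun U hU => hρ.isOpen_of_isOpenWrt (hopen U hU)) (by rwa [← sUnion_eq_biUnion])
  exact ⟨𝒱, h𝒱𝒰, h𝒱, by rwa [sUnion_eq_biUnion]⟩

theorem isCompactWrt_univ (hc : IsCompleteWrt ρ) (htb : IsTotallyBoundedWrt ρ univ) :
    IsCompactWrt ρ univ := by
  let := hρ.uniformSpace
  have := hρ.completeSpace hc
  exact hρ.isCompactWrt_of_isCompact <| isCompact_iff_totallyBounded_isComplete.2
    ⟨hρ.totallyBounded_of_isTotallyBoundedWrt htb, isComplete_univ⟩

end IsUniformDist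

namespace IsFMetric

variable {X : Type*} {D : X → X → ℝ} {f : ℝ → ℝ} {α : ℝ} (hD : IsFMetric D f α)
include hD

theorem f_le_f_of_le {s t : ℝ} (hs : 0 < s) (hst : s ≤ t) : f s ≤ f t :=
  hst.eq_or_lt.elim (fun h => h ▸ le_rfl) (hD.f_mono s t hs)

theorem exists_pos_f_lt (c : ℝ) : ∃ δ > 0, f δ < c := by
  have hpos (n : ℕ) : 0 < 1 / ((n : ℝ) + 1) := Nat.one_div_pos_of_nat
  have hbot := (hD.f_tendsto _ hpos).1 tendsto_one_div_add_atTop_nhds_zero_nat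
  obtain ⟨n, hn⟩ := (hbot.eventually (eventually_lt_atBot c)).exists
  exact ⟨_, hpos n, hn⟩

theorem f_le_f_add_add (x y z : X) (hxz : 0 < D x z) : f (D x z) ≤ f (D x y + D y z) + α := by
  simpa [Finset.sum_range_succ] using
    hD.ineq x z 3 (by norm_num) (fun i => if i = 0 then x else if i = 1 then y else z) rfl rfl hxz

theorem add_pos_of_pos (x y z : X) (hxz : 0 < D x z) : 0 < D x y + D y z := by
  by_contra! hsum
  obtain rfl : x = y := (hD.eq_iff x y).1 (by linarith [hD.nonneg x y, hD.nonneg y z])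
  linarith [hD.nonneg x x]

theorem relaxed_triangle (ε : ℝ) (hε : 0 < ε) :
    ∃ δ > 0, ∀ x y z, D x y < δ → D y z < δ → D x z < ε := by
  obtain ⟨δ, hδ, hfδ⟩ := hD.exists_pos_f_lt (f ε - α)
  refine ⟨δ / 2, half_pos hδ, fun x y z hxy hyz => ?_⟩
  by_contra! hxz
  have : f ε < f ε := calc
    f ε ≤ f (D x z) := hD.f_le_f_of_le hε hxz
    _ ≤ f (D x y + D y z) + α := hD.f_le_f_add_add x y z (hε.trans_le hxz)
    _ ≤ f δ + α := by
      gcongr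
      exact hD.f_le_f_of_le (hD.add_pos_of_pos x y z (hε.trans_le hxz)) (by linarith)
    _ < f ε := by linarith
  exact this.false

theorem isUniformDist : IsUniformDist D :=
  ⟨fun x => (hD.eq_iff x x).2 rfl, hD.symm, hD.relaxed_triangle⟩

end IsFMetric

theorem fCompact_of_fComplete_fTotallyBounded_general {X : Type v}
    (D : X → X → ℝ) (f : ℝ → ℝ) (α : ℝ) (hD : IsFMetric D f α)
    (hcomplete : IsCompleteWrt D)
    (htb : IsTotallyBoundedWrt D (Set.univ : Set X)) :
    IsCompactWrt D (Set.univ : Set X) :=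
  hD.isUniformDist.isCompactWrt_univ hcomplete htb

/-- if `X` is `F`-complete and `F`-totally bounded, then `X` is
`F`-compact. -/
theorem fCompact_of_fComplete_fTotallyBounded {X : Type v} [Nonempty X]
    (D : X → X → ℝ) (f : ℝ → ℝ) (α : ℝ) (hD : IsFMetric D f α)
    (hcomplete : IsCompleteWrt D)
    (htb : IsTotallyBoundedWrt D (Set.univ : Set X)) :
    IsCompactWrt D (Set.univ : Set X) :=
  fCompact_of_fComplete_fTotallyBounded_general D f α hD hcomplete htb
end
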